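/- Define F : ℝ^10 → ℝ^10 by F(x)_j = x_{j-1} for j ∈ {2,…,8}, F(x)_9 = x_8 + x_10/2, and F(x)_10 = x_9 + x_10/2, F(x)_1 = 0 — i.e., the distribution transformer of the Markov chain on states s_1,…,s_10 where s_i moves to s_{i+1} with probability 1 for i < 10 and s_10 moves to s_9 or s_10 with probability 1/2 each. Then the set I = {x in the probability simplex of ℝ^10 : x_9 + x_10 ≥ 1/5 and x_10 ≥ 1/10} satisfies F(I) ⊆ I and contains μ_0 = (1/10,…,1/10); consequently the stream μ_0, μ_{n+1} = F(μ_n) satisfies μ_n(s_10) ≥ 1/10 for all n ≥ 0. -/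
import Mathlib


open Finset

/-- The distribution transformer of the Markov chain `Chain` on states `s_1,…,s_10`
(indices `0,…,9`): `s_i → s_{i+1}` with probability `1` for `i < 10`, and
`s_10 → s_9` or `s_10 → s_10` with probability `1/2` each. So
`F(x)_1 = 0`, `F(x)_j = x_{j-1}` for `j ∈ {2,…,8}`, `F(x)_9 = x_8 + x_10/2`,
`F(x)_10 = x_9 + x_10/2`. -/
noncomputable def F (x : Fin 10 → ℝ) : Fin 10 → ℝ :=
  ![0, x 0, x 1, x 2, x 3, x 4, x 5, x 6, x 7 + x 9 / 2, x 8 + x 9 / 2]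

/-- The invariant set `I`: distributions `x` in the probability simplex of `ℝ^10` with
`x_9 + x_10 ≥ 1/5` and `x_10 ≥ 1/10` (zero-based indices `8` and `9`). -/
def I : Set (Fin 10 → ℝ) :=
  {x | (∀ i, 0 ≤ x i) ∧ (∑ i, x i = 1) ∧ 1 / 5 ≤ x 8 + x 9 ∧ 1 / 10 ≤ x 9}

/-- The stream of distributions of `Chain` from the uniform initial distribution. -/
noncomputable def muChain : ℕ → Fin 10 → ℝ
  | 0 => fun _ => 1 / 10
  | n + 1 => F (muChain n)

lemma sum_univ_ten' (f : Fin 10 → ℝ) :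
    ∑ i, f i = f 0 + f 1 + f 2 + f 3 + f 4 + f 5 + f 6 + f 7 + f 8 + f 9 := by
  rw [Fin.sum_univ_castSucc, Fin.sum_univ_castSucc, Fin.sum_univ_eight]
  rfl

lemma F_mem (x : Fin 10 → ℝ) (hx : x ∈ I) : F x ∈ I := by
  obtain ⟨hpos, hsum, h89, h9⟩ := hx
  have h7 := hpos 7
  have h8 := hpos 8
  refine ⟨?_, ?_, ?_, ?_⟩
  · intro i
    have h0 := hpos 0; have h1 := hpos 1; have h2 := hpos 2; have h3 := hpos 3
    have h4 := hpos 4; have h5 := hpos 5; have h6 := hpos 6; have h9' := hpos 9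
    fin_cases i <;>
      [skip; exact h0; exact h1; exact h2; exact h3; exact h4; exact h5; exact h6;
        (show (0:ℝ) ≤ x 7 + x 9 / 2; linarith); (show (0:ℝ) ≤ x 8 + x 9 / 2; linarith)]
    exact le_refl 0
  · rw [sum_univ_ten'] at hsum ⊢
    show (0:ℝ) + x 0 + x 1 + x 2 + x 3 + x 4 + x 5 + x 6 + (x 7 + x 9 / 2) + (x 8 + x 9 / 2) = 1
    linarith
  · show 1 / 5 ≤ (x 7 + x 9 / 2) + (x 8 + x 9 / 2); linarith
  · show 1 / 10 ≤ x 8 + x 9 / 2; linarith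

/-- `I` is closed under `F` and contains the uniform distribution
`μ_0 = (1/10,…,1/10)`; consequently the stream `μ_0, μ_{n+1} = F(μ_n)` satisfies
`μ_n(s_10) ≥ 1/10` for all `n`. -/
theorem chain_invariant :
    (∀ x ∈ I, F x ∈ I) ∧ (fun _ : Fin 10 => (1 / 10 : ℝ)) ∈ I ∧
    (∀ n, 1 / 10 ≤ muChain n 9) := by
  have hu : (fun _ : Fin 10 => (1 / 10 : ℝ)) ∈ I := by
    refine ⟨fun i => by norm_num, ?_, by norm_num, by norm_num⟩
    rw [sum_univ_ten']; norm_num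
  have hmem : ∀ n, muChain n ∈ I := by
    intro n
    induction n with
    | zero => exact hu
    | succ n ih => exact F_mem _ ih
  exact ⟨F_mem, hu, fun n => (hmem n).2.2.2⟩
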